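/- arXiv:cs/0304010 — 6 statements merged into one kernel-verified Lean document; each statement's English description precedes it below -/
import Mathlib

section
/- The characteristic polynomial of the block matrix [⟨T,S⟩] ∈ M_{nm}(F), which has identity blocks I on the superdiagonal, blocks a_0 T, a_1 T, ..., a_{n-1} T in the last block row, and zero blocks elsewhere, equals f_S(λ)^m · f_T(λ^n / f_S(λ)), where f_S(λ) = a_0 + a_1 λ + ... + a_{n-1} λ^{n-1} and f_T is the characteristic polynomial of T. Formally, it equals the homogenization: char([⟨T,S⟩]) = Σ_i c_i (λ^n)^i f_S(λ)^{m-i} where f_T(x) = Σ_i c_i x^i. -/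
open Polynomial Matrix

/-- The `nm × nm` TSR block matrix: identity blocks on the superdiagonal and
blocks `a_i • T` in the last block row. Indices are pairs `(i, k)` with
`i : Fin n` the block-row index and `k : Fin m` the index inside the block. -/
def tsrMatrix {F : Type*} [Field F] {m n : ℕ} (T : Matrix (Fin m) (Fin m) F)
    (a : Fin n → F) : Matrix (Fin n × Fin m) (Fin n × Fin m) F :=
  fun p q =>
    if (q.1 : ℕ) = (p.1 : ℕ) + 1 then (if p.2 = q.2 then 1 else 0)
    else if (p.1 : ℕ) = n - 1 then a q.1 * T p.2 q.2
    else 0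

/-! The characteristic matrix of `[⟨T,S⟩]` is an `n × n` block matrix whose blocks all lie in the
commutative algebra generated over `F[X]` by `T`. By Silvester's theorem (`Matrix.det_det`) its
determinant is obtained by first taking the `n × n` determinant over `F[X][Y]` and then
substituting `Y := T`. That matrix is `X • 1` minus a companion matrix with last row `(a_j Y)`,
whose determinant is `X ^ n - f_S(X) Y`, so the charpoly is `det (X ^ n • 1 - f_S(X) • T)`.
This is the homogenization of `f_T`, since the characteristic polynomial of `g • B` has
coefficients `c_i g ^ (m - i)`, as one reads off from its reverse `det (1 - X • g • B)`. -/

namespace Matrix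

variable {R : Type*}

def companion [Zero R] [One R] {n : ℕ} (c : Fin n → R) : Matrix (Fin n) (Fin n) R :=
  of fun i j => if (j : ℕ) = i + 1 then 1 else if (i : ℕ) = n - 1 then c j else 0

variable [CommRing R]

theorem scalar_sub_companion_mulVec_powers {k : ℕ} (c : Fin (k + 1) → R) (x : R) :
    (scalar _ x - companion c) *ᵥ (fun j : Fin (k + 1) => x ^ (j : ℕ)) =
      Pi.single (M := fun _ => R) (Fin.last k) (x ^ (k + 1) - ∑ j, c j * x ^ (j : ℕ)) := by
  ext i
  rcases Fin.eq_castSucc_or_eq_last i with ⟨i, rfl⟩ | rfl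
  · have hsucc (j : Fin (k + 1)) : (j : ℕ) = i + 1 ↔ j = i.succ := by simp [Fin.ext_iff]
    simp [mulVec, dotProduct, companion, sub_mul, i.castSucc_ne_last, diagonal_apply, i.isLt.ne,
      hsucc, pow_succ']
  · have hlt (j : Fin (k + 1)) : (j : ℕ) ≠ k + 1 := j.isLt.ne
    simp [mulVec, dotProduct, companion, sub_mul, diagonal_apply, hlt, pow_succ']

theorem det_scalar_sub_companion {n : ℕ} (c : Fin n → R) (x : R) :
    (scalar (Fin n) x - companion c).det = x ^ n - ∑ j, c j * x ^ (j : ℕ) := by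
  cases n with
  | zero => simp
  | succ k =>
    set A := scalar (Fin (k + 1)) x - companion c
    -- adding `x ^ j` times column `j` to column `0` concentrates that column in the last row
    have hcol : (A.updateCol 0 (A *ᵥ fun j => x ^ (j : ℕ))).det = A.det := by
      convert det_updateCol_sum A 0 (fun j => x ^ (j : ℕ)) using 3
      · ext i; simp [mulVec, dotProduct, mul_comm]
      · simp
    have hminor (v : Fin (k + 1) → R) :
        ((A.updateCol 0 v).submatrix Fin.castSucc Fin.succ).det = (-1) ^ k := by
      rw [det_of_isLowerTriangular]
      · simp [A, companion, Fin.ext_iff]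
      · intro i j (hij : i < j)
        have hij' : (i : ℕ) < j := hij
        simp [A, companion, Fin.ext_iff, hij'.ne', i.isLt.ne,
          show (i : ℕ) ≠ j + 1 by omega]
    rw [← hcol, scalar_sub_companion_mulVec_powers, det_succ_column_zero,
      Fintype.sum_eq_single (Fin.last k)]
    · rw [Fin.succAbove_last, hminor, mul_right_comm, Fin.val_last, ← mul_pow]
      simp
    · intro i hi
      simp [hi]

variable {ι : Type*} [Fintype ι] [DecidableEq ι]

theorem charpolyRev_smul (g : R) (B : Matrix ι ι R) :
    (g • B).charpolyRev = B.charpolyRev.comp (C g * X) := by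
  rw [charpolyRev, charpolyRev, comp_eq_aeval, AlgHom.map_det]
  congr 1
  ext i j : 1
  simp only [sub_apply, one_apply, smul_apply, map_apply, smul_eq_mul, map_mul,
    AlgHom.mapMatrix_apply, X_mul_C, aeval_sub, apply_ite (aeval (C g * X)), map_one, map_zero,
    aeval_C, algebraMap_eq, aeval_X, sub_right_inj]
  ring

theorem coeff_charpoly_smul (g : R) (B : Matrix ι ι R) (i : ℕ) :
    (g • B).charpoly.coeff i = B.charpoly.coeff i * g ^ (Fintype.card ι - i) := by
  nontriviality R
  rcases le_or_gt i (Fintype.card ι) with hi | hi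
  · have hrev (A : Matrix ι ι R) :
        A.charpoly.coeff i = A.charpolyRev.coeff (Fintype.card ι - i) := by
      rw [← reverse_charpoly, coeff_reverse, charpoly_natDegree_eq_dim,
        revAt_le (Nat.sub_le _ _), Nat.sub_sub_self hi]
    rw [hrev, hrev, charpolyRev_smul, comp_C_mul_X_coeff]
  · rw [coeff_eq_zero_of_natDegree_lt, coeff_eq_zero_of_natDegree_lt, zero_mul] <;>
      rwa [charpoly_natDegree_eq_dim]

theorem det_scalar_sub_smul (u g : R) (B : Matrix ι ι R) :
    (scalar ι u - g • B).det =
      ∑ i ∈ Finset.range (Fintype.card ι + 1),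
        B.charpoly.coeff i * u ^ i * g ^ (Fintype.card ι - i) := by
  nontriviality R
  rw [← eval_charpoly, eval_eq_sum_range, charpoly_natDegree_eq_dim]
  refine Finset.sum_congr rfl fun i _ => ?_
  rw [coeff_charpoly_smul]
  ring

end Matrix

theorem charmatrix_tsrMatrix {F : Type*} [Field F] {m n : ℕ} (T : Matrix (Fin m) (Fin m) F)
    (a : Fin n → F) :
    charmatrix (tsrMatrix T a) = comp _ _ _ _ _
      ((scalar (Fin n) (C X) - companion fun j => C (C (a j)) * X).map
        (aeval (T.map C)).toRingHom) := by
  ext ⟨i, p⟩ ⟨j, q⟩ : 1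
  simp [charmatrix_apply, tsrMatrix, companion, diagonal_apply, apply_ite (aeval (T.map C)),
    apply_ite (fun M : Matrix (Fin m) (Fin m) F[X] => M p q), algebraMap_matrix_apply,
    ← Algebra.smul_def, one_apply, apply_ite C, ite_and]

theorem tsr_charpoly_general {F : Type*} [Field F] {m n : ℕ}
    (T : Matrix (Fin m) (Fin m) F) (a : Fin n → F) :
    (tsrMatrix T a).charpoly =
      ∑ i ∈ Finset.range (m + 1),
        C (T.charpoly.coeff i) * (X ^ n) ^ i *
          (∑ j : Fin n, C (a j) * X ^ (j : ℕ)) ^ (m - i) := by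
  set g : F[X] := ∑ j : Fin n, C (a j) * X ^ (j : ℕ)
  have hdet : (scalar (Fin n) (C X) - companion fun j => C (C (a j)) * X).det =
      C (X ^ n) - C g * X := by
    rw [det_scalar_sub_companion]
    simp [g, Finset.sum_mul, mul_right_comm]
  have hsubst : (aeval (T.map C)).toRingHom (C (X ^ n) - C g * X) =
      scalar (Fin m) (X ^ n) - g • T.map C := by
    rw [AlgHom.toRingHom_eq_coe, RingHom.coe_coe, map_sub, map_mul, aeval_C, aeval_C, aeval_X,
      Algebra.smul_def]
    rfl
  rw [charpoly, charmatrix_tsrMatrix, ← det_det, hdet, hsubst, det_scalar_sub_smul, charpoly_map,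
    Fintype.card_fin]
  simp [coeff_map]

theorem tsr_charpoly {F : Type*} [Field F] {m n : ℕ} (hm : 1 ≤ m) (hn : 1 ≤ n)
    (T : Matrix (Fin m) (Fin m) F) (a : Fin n → F) :
    (tsrMatrix T a).charpoly =
      ∑ i ∈ Finset.range (m + 1),
        C (T.charpoly.coeff i) * (X ^ n) ^ i *
          (∑ j : Fin n, C (a j) * X ^ (j : ℕ)) ^ (m - i) :=
  tsr_charpoly_general T a
end

section
/- Let Q = 𝔭_q(g,f) be a candidate with deg f > deg g, L the splitting field of q over F, and α ∈ L a root of q. Then Q is irreducible over F if and only if f - αg is irreducible over L. -/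
/-!
Let `θ` be a root of `f - α g` in an algebraic closure of `L`. Coprimality forces `g(θ) ≠ 0`, so
`α = f(θ) / g(θ) ∈ F(θ)`, and `Q(θ) = g(θ)^m q(α) = 0`. Over a finite field every root of `q`
generates its splitting field, so `L = F(α) ⊆ F(θ)`, hence `F(θ) = L(θ)` and
`[F(θ) : F] = m · [L(θ) : L]`. As `deg Q = m · deg f = m · deg (f - α g)`, the polynomial `Q` is the
minimal polynomial of `θ` over `F` (up to a unit) exactly when `f - α g` is the one over `L`.
-/

open Polynomial

/-- The homogenization `𝔭_q(g,f) = ∑ q_i f^i g^(m-i)` where `m = deg q`. -/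
noncomputable def homog {F : Type*} [Field F] (q g f : Polynomial F) : Polynomial F :=
  ∑ i ∈ Finset.range (q.natDegree + 1), C (q.coeff i) * f ^ i * g ^ (q.natDegree - i)

open IntermediateField

section Homog

variable {F : Type*} [Field F]

theorem aeval_homog_of_aeval_eq_mul {A : Type*} [CommRing A] [Algebra F A] (q g f : F[X])
    {x a : A} (h : aeval x f = a * aeval x g) :
    aeval x (homog q g f) = aeval x g ^ q.natDegree * aeval a q := by
  rw [homog, map_sum, aeval_eq_sum_range (p := q), Finset.mul_sum]
  refine Finset.sum_congr rfl fun i hi => ?_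
  rw [← pow_mul_pow_sub (aeval x g) (Nat.lt_succ_iff.mp (Finset.mem_range.mp hi))]
  simp only [map_mul, map_pow, aeval_C, h, Algebra.smul_def]
  ring

theorem natDegree_homog {q g f : F[X]} (hq : q ≠ 0) (hfg : g.natDegree < f.natDegree) :
    (homog q g f).natDegree = q.natDegree * f.natDegree := by
  set m := q.natDegree
  have hlead : (C q.leadingCoeff * f ^ m).natDegree = m * f.natDegree := by
    rw [natDegree_C_mul (leadingCoeff_ne_zero.mpr hq), natDegree_pow]
  have hlower : ∀ i ∈ Finset.range m,
      (C (q.coeff i) * f ^ i * g ^ (m - i)).natDegree < m * f.natDegree := by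
    intro i hi
    have him : i < m := Finset.mem_range.mp hi
    calc (C (q.coeff i) * f ^ i * g ^ (m - i)).natDegree
        ≤ i * f.natDegree + (m - i) * g.natDegree := by
          refine natDegree_mul_le.trans (add_le_add ?_ natDegree_pow_le)
          exact natDegree_C_mul_le _ _ |>.trans natDegree_pow_le
      _ < i * f.natDegree + (m - i) * f.natDegree := by gcongr; omega
      _ = m * f.natDegree := by rw [← add_mul, Nat.add_sub_cancel' him.le]
  rw [homog, Finset.sum_range_succ, Nat.sub_self, pow_zero, mul_one, ← leadingCoeff,
    natDegree_add_eq_right_of_degree_lt, hlead]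
  refine (degree_sum_le _ _).trans_lt ((Finset.sup_lt_iff ?_).mpr fun i hi => ?_)
  · refine bot_lt_iff_ne_bot.mpr (degree_ne_bot.mpr (mul_ne_zero ?_ (pow_ne_zero _ ?_)))
    · exact C_ne_zero.mpr (leadingCoeff_ne_zero.mpr hq)
    · exact ne_zero_of_natDegree_gt hfg
  · exact degree_lt_degree (hlead ▸ hlower i hi)

theorem natDegree_map_sub_C_mul_map {L : Type*} [Field L] (i : F →+* L) (a : L) {f g : F[X]}
    (hfg : g.natDegree < f.natDegree) :
    (f.map i - C a * g.map i).natDegree = f.natDegree := by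
  rw [natDegree_sub_eq_left_of_natDegree_lt] <;> rw [natDegree_map]
  exact (natDegree_C_mul_le _ _).trans_lt (by rwa [natDegree_map])

theorem mem_adjoin_simple_of_aeval_eq_mul {K : Type*} [Field K] [Algebra F K] {f g : F[X]}
    (hfg : IsCoprime f g) {θ a : K} (h : aeval θ f = a * aeval θ g) : a ∈ F⟮θ⟯ := by
  have hg : aeval θ g ≠ 0 := fun hg => by
    obtain ⟨u, v, huv⟩ := hfg
    simpa [hg, h] using congrArg (aeval θ) huv
  have hmem : ∀ r : F[X], aeval θ r ∈ F⟮θ⟯ :=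
    fun r => AdjoinSimple.coe_aeval_gen_apply (F := F) (α := θ) r ▸ SetLike.coe_mem _
  rw [eq_div_of_mul_eq hg h.symm]
  exact div_mem (hmem f) (hmem g)

end Homog

theorem irreducible_iff_natDegree_minpoly_eq {K A : Type*} [Field K] [CommRing A] [IsDomain A]
    [Algebra K A] {p : K[X]} (hp : p ≠ 0) {x : A} (hx : aeval x p = 0) :
    Irreducible p ↔ (minpoly K x).natDegree = p.natDegree := by
  constructor
  · intro hirr
    rw [← minpoly.eq_of_irreducible hirr hx,
      natDegree_mul_C (inv_ne_zero (leadingCoeff_ne_zero.mpr hp))]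
  · intro hdeg
    have hint : IsIntegral K x := isAlgebraic_iff_isIntegral.mp ⟨p, hp, hx⟩
    exact (associated_of_dvd_of_natDegree_le (minpoly.dvd K x hx) hp hdeg.ge).irreducible
      (minpoly.irreducible hint)

section Tower

variable {F L K : Type*} [Field F] [Field L] [Field K] [Algebra F L] [Algebra L K] [Algebra F K]
  [IsScalarTower F L K]

theorem algebraMap_mem_of_adjoin_simple_eq_top {α : L} (hα : F⟮α⟯ = ⊤)
    {E : IntermediateField F K} (h : algebraMap L K α ∈ E) (x : L) : algebraMap L K x ∈ E := by
  have hle : F⟮α⟯ ≤ E.comap (IsScalarTower.toAlgHom F L K) := adjoin_simple_le_iff.mpr h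
  exact hle (hα ▸ mem_top)

theorem restrictScalars_adjoin_simple_eq {θ : K} (h : ∀ x : L, algebraMap L K x ∈ F⟮θ⟯) :
    (L⟮θ⟯).restrictScalars F = F⟮θ⟯ := by
  refine le_antisymm (fun y hy => ?_) (adjoin_simple_le_iff.mpr (mem_adjoin_simple_self L θ))
  refine (Subfield.closure_le (t := F⟮θ⟯.toSubfield)).mpr ?_ hy
  exact Set.union_subset (Set.range_subset_iff.mpr h)
    (Set.singleton_subset_iff.mpr (mem_adjoin_simple_self F θ))

theorem finrank_adjoin_simple_eq_mul {θ : K} (h : ∀ x : L, algebraMap L K x ∈ F⟮θ⟯) :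
    Module.finrank F F⟮θ⟯ = Module.finrank F L * Module.finrank L L⟮θ⟯ := by
  rw [Module.finrank_mul_finrank, ← restrictScalars_adjoin_simple_eq h]
  rfl

end Tower

section FiniteField

variable {F L : Type*} [Field F] [Finite F] [Field L] [Algebra F L] {q : F[X]}
  [IsSplittingField F L q] {α : L}

theorem adjoin_simple_eq_top_of_isSplittingField (hq : Irreducible q) (hα : aeval α q = 0) :
    F⟮α⟯ = ⊤ := by
  have : FiniteDimensional F L := IsSplittingField.finiteDimensional L q
  have : Finite L := Module.finite_of_finite F
  have hmin : ∀ x : L, aeval x q = 0 → minpoly F x = q * C q.leadingCoeff⁻¹ :=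
    fun x hx => (minpoly.eq_of_irreducible hq hx).symm
  -- `F⟮α⟯ / F` is an extension of finite fields, hence normal.
  have hsplit : Splits ((minpoly F α).map (algebraMap F F⟮α⟯)) := by
    rw [← minpoly_gen]
    exact Normal.splits inferInstance _
  rw [eq_top_iff, ← ((isSplittingField_iff_intermediateField (p := q)).mp inferInstance).2,
    adjoin_le_iff]
  intro x hx
  have hx0 : aeval x q = 0 := (mem_rootSet.mp hx).2
  have hint : IsIntegral F x := isAlgebraic_iff_isIntegral.mp ⟨q, hq.ne_zero, hx0⟩
  refine hint.mem_intermediateField_of_minpoly_splits ?_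
  rwa [hmin x hx0, ← hmin α hα]

theorem finrank_eq_natDegree_of_isSplittingField (hq : Irreducible q) (hα : aeval α q = 0) :
    Module.finrank F L = q.natDegree := by
  rw [← finrank_top', ← adjoin_simple_eq_top_of_isSplittingField hq hα,
    adjoin.finrank (isAlgebraic_iff_isIntegral.mp ⟨q, hq.ne_zero, hα⟩),
    ← minpoly.eq_of_irreducible hq hα,
    natDegree_mul_C (inv_ne_zero (leadingCoeff_ne_zero.mpr hq.ne_zero))]

end FiniteField

theorem homog_irreducible_iff_general {F L : Type*} [Field F] [Finite F]
    [Field L] [Algebra F L] (q f g : Polynomial F)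
    (hq : Irreducible q)
    (hfg : IsCoprime f g) (hdeg : g.natDegree < f.natDegree)
    (hL : Polynomial.IsSplittingField F L q) (α : L) (hα : Polynomial.aeval α q = 0) :
    Irreducible (homog q g f) ↔
      Irreducible (f.map (algebraMap F L) - C α * g.map (algebraMap F L)) := by
  set p := f.map (algebraMap F L) - C α * g.map (algebraMap F L)
  have hf : 0 < f.natDegree := Nat.zero_lt_of_lt hdeg
  have hp : p.natDegree = f.natDegree := natDegree_map_sub_C_mul_map _ α hdeg
  have hQ : (homog q g f).natDegree = q.natDegree * f.natDegree := natDegree_homog hq.ne_zero hdeg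
  have hp0 : p ≠ 0 := ne_zero_of_natDegree_gt (hp ▸ hf)
  have hQ0 : homog q g f ≠ 0 := ne_zero_of_natDegree_gt (hQ ▸ Nat.mul_pos hq.natDegree_pos hf)
  obtain ⟨θ, hθ⟩ := IsAlgClosed.exists_aeval_eq_zero (AlgebraicClosure L) p
    (degree_ne_of_natDegree_ne (hp ▸ hf.ne'))
  have hfθ : aeval θ f = algebraMap L _ α * aeval θ g := by
    simpa [p, sub_eq_zero, aeval_map_algebraMap] using hθ
  have hQθ : aeval θ (homog q g f) = 0 := by
    rw [aeval_homog_of_aeval_eq_mul q g f hfθ, aeval_algebraMap_apply, hα, map_zero, mul_zero]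
  have htower := finrank_adjoin_simple_eq_mul <| algebraMap_mem_of_adjoin_simple_eq_top
    (adjoin_simple_eq_top_of_isSplittingField hq hα) (mem_adjoin_simple_of_aeval_eq_mul hfg hfθ)
  rw [adjoin.finrank (isAlgebraic_iff_isIntegral.mp ⟨_, hQ0, hQθ⟩),
    adjoin.finrank (isAlgebraic_iff_isIntegral.mp ⟨_, hp0, hθ⟩),
    finrank_eq_natDegree_of_isSplittingField hq hα] at htower
  rw [irreducible_iff_natDegree_minpoly_eq hQ0 hQθ, irreducible_iff_natDegree_minpoly_eq hp0 hθ,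
    htower, hQ, hp]
  exact Nat.mul_left_cancel_iff hq.natDegree_pos

theorem homog_irreducible_iff {F L : Type*} [Field F] [Finite F]
    [Field L] [Algebra F L] (q f g : Polynomial F)
    (hqm : q.Monic) (hq : Irreducible q) (hdq : 1 ≤ q.natDegree)
    (hfg : IsCoprime f g) (hdeg : g.natDegree < f.natDegree)
    (hL : Polynomial.IsSplittingField F L q) (α : L) (hα : Polynomial.aeval α q = 0) :
    Irreducible (homog q g f) ↔
      Irreducible (f.map (algebraMap F L) - C α * g.map (algebraMap F L)) :=
  homog_irreducible_iff_general q f g hq hfg hdeg hL α hα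
end

section
/- Let L/F be finite fields, α ∈ L a root of the monic irreducible q ∈ F[λ], and f, g ∈ F[λ]. If u ∈ L[λ] is an irreducible factor of f - αg and σ ∈ Gal(L/F) with σ(α) ≠ α, then u and σ(u) are relatively prime in L[λ], provided f - αg is not a scalar multiple of f - σ(α)g (e.g., when g ≠ 0 and f, g relatively prime with deg f > deg g). -/
open Polynomial

theorem coprime_galois_conjugate_factors {F L : Type*} [Field F] [Finite F]
    [Field L] [Algebra F L] (q f g : Polynomial F)
    (hqm : q.Monic) (hq : Irreducible q)
    (α : L) (hα : Polynomial.aeval α q = 0)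
    (hfg : IsCoprime f g) (hg : g ≠ 0) (hdeg : g.natDegree < f.natDegree)
    (σ : L ≃ₐ[F] L) (hσ : σ α ≠ α)
    (u : Polynomial L) (hu : Irreducible u)
    (hud : u ∣ (f.map (algebraMap F L) - C α * g.map (algebraMap F L))) :
    IsCoprime u (u.map (σ : L →+* L)) := by
  set φ := algebraMap F L
  set fL := f.map φ with hfL
  set gL := g.map φ with hgL
  rw [hu.coprime_iff_not_dvd]
  intro hdvd
  have hfix : ∀ p : Polynomial F, (p.map φ).map (σ : L →+* L) = p.map φ := by
    intro p
    rw [Polynomial.map_map]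
    congr 1
    ext x
    exact σ.commutes x
  have h2 : u ∣ fL - C (σ α) * gL := by
    refine hdvd.trans ?_
    have := Polynomial.map_dvd (σ : L →+* L) hud
    rwa [Polynomial.map_sub, Polynomial.map_mul, Polynomial.map_C, hfix f, hfix g] at this
  have hdiff : u ∣ (C (σ α) - C α) * gL := by
    have : (C (σ α) - C α) * gL = (fL - C α * gL) - (fL - C (σ α) * gL) := by ring
    rw [this]
    exact dvd_sub hud h2
  have hunit : IsUnit (C (σ α) - C α) := by
    rw [← C_sub]
    exact isUnit_C.mpr (isUnit_iff_ne_zero.mpr (sub_ne_zero.mpr hσ))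
  have hug : u ∣ gL := (hunit.dvd_mul_left).mp hdiff
  have huf : u ∣ fL := by
    have : fL = (fL - C α * gL) + C α * gL := by ring
    rw [this]
    exact dvd_add hud (hug.mul_left _)
  have hcop : IsCoprime fL gL := hfg.map (mapRingHom φ)
  exact hu.not_isUnit (hcop.isUnit_of_dvd' huf hug)
end

section
/- Let F be a finite field and T ∈ M_m(F) with reducible characteristic polynomial f_T. Then for any S = ⟨a_0, ..., a_{n-1}⟩ ∈ F^n, the characteristic polynomial of the TSR matrix [⟨T,S⟩] is reducible over F. -/
/-!
Adding `X ^ (k - j)` times block column `k` to block column `j` of the characteristic matrix,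
for all `k > j`, leaves a single `-1` block in each block row but the last and puts
`X ^ n • 1 - f_S • T` in the corner. Hence `χ_[⟨T,S⟩] = det (X ^ n • 1 - f_S • T)`, the
homogenization of `χ_T` evaluated at `(X ^ n, f_S)`. Homogenization is multiplicative, and since
`deg f_S < n` a factor of `χ_T` of degree `d` becomes one of degree at most `n d`. These bounds add
up to `n m = deg χ_[⟨T,S⟩]`, so they are equalities, and a factorization of `χ_T` into non-units
gives one of `χ_[⟨T,S⟩]`.
-/

open Polynomial Matrix

open scoped Kronecker

namespace Matrix

variable {R : Type*} [CommRing R] {ι : Type*} [Fintype ι] [DecidableEq ι]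

theorem isHomogeneous_det {σ : Type*} {M : Matrix ι ι (MvPolynomial σ R)}
    (hM : ∀ i j, (M i j).IsHomogeneous 1) : M.det.IsHomogeneous (Fintype.card ι) := by
  have hcard : Fintype.card ι = 0 + ∑ _ : ι, 1 := by simp
  rw [det_apply', hcard]
  refine MvPolynomial.IsHomogeneous.sum _ _ _ fun τ _ => ?_
  rw [← map_intCast (MvPolynomial.C : R →+* MvPolynomial σ R)]
  exact (MvPolynomial.isHomogeneous_C _ _).mul
    (MvPolynomial.IsHomogeneous.prod _ _ _ fun i _ => hM (τ i) i)

theorem det_X_smul_one_sub_X_smul_map (T : Matrix ι ι R) :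
    det ((MvPolynomial.X 0 : MvPolynomial (Fin 2) R) • (1 : Matrix ι ι _) -
        (MvPolynomial.X 1 : MvPolynomial (Fin 2) R) • T.map (algebraMap R _)) =
      T.charpoly.homogenize (Fintype.card ι) := by
  refine (homogenize_eq_of_isHomogeneous (isHomogeneous_det fun i j => ?_) ?_).symm
  · rw [sub_apply, smul_apply, smul_apply, map_apply, one_apply, smul_eq_mul, smul_eq_mul,
      MvPolynomial.algebraMap_eq, mul_comm (MvPolynomial.X 1)]
    refine MvPolynomial.IsHomogeneous.sub ?_ (MvPolynomial.isHomogeneous_C_mul_X _ _)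
    split_ifs
    · simpa using MvPolynomial.isHomogeneous_X R (0 : Fin 2)
    · simpa using MvPolynomial.isHomogeneous_zero _ _ 1
  · rw [← AlgHom.coe_toRingHom, RingHom.map_det, charpoly]
    congr 1
    ext i j
    by_cases h : i = j <;> simp [h]

theorem det_smul_one_sub_smul_map {A : Type*} [CommRing A] [Algebra R A] (T : Matrix ι ι R)
    (x y : A) : (x • (1 : Matrix ι ι A) - y • T.map (algebraMap R A)).det =
      MvPolynomial.aeval ![x, y] (T.charpoly.homogenize (Fintype.card ι)) := by
  rw [← det_X_smul_one_sub_X_smul_map, ← AlgHom.coe_toRingHom, RingHom.map_det]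
  congr 1
  ext i j
  by_cases h : i = j <;> simp [h]

end Matrix

namespace Polynomial

theorem natDegree_aeval_homogenize_le {R : Type*} [CommSemiring R] (f : R[X]) (d : ℕ)
    {p q : R[X]} {k : ℕ} (hp : p.natDegree ≤ k) (hq : q.natDegree ≤ k) :
    (MvPolynomial.aeval ![p, q] (f.homogenize d)).natDegree ≤ d * k := by
  induction f using Polynomial.induction_on' with
  | add f g hf hg =>
    rw [homogenize_add, map_add]
    exact natDegree_add_le_of_degree_le hf hg
  | monomial j c =>
    rcases le_or_gt j d with hj | hj
    · rw [← C_mul_X_pow_eq_monomial, homogenize_C_mul, homogenize_X_pow hj]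
      simp only [map_mul, map_pow, MvPolynomial.aeval_C, MvPolynomial.aeval_X, algebraMap_eq,
        Matrix.cons_val_zero, Matrix.cons_val_one]
      refine (natDegree_C_mul_le _ _).trans (natDegree_mul_le.trans ?_)
      calc (p ^ j).natDegree + (q ^ (d - j)).natDegree ≤ j * k + (d - j) * k :=
            add_le_add (natDegree_pow_le_of_le _ hp) (natDegree_pow_le_of_le _ hq)
        _ = d * k := by rw [← add_mul, Nat.add_sub_cancel' hj]
    · simp [homogenize_monomial_of_lt hj]

theorem not_irreducible_mul_of_natDegree_le {R : Type*} [CommRing R] [IsDomain R] {f g : R[X]}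
    {k l : ℕ} (hf : f.natDegree ≤ k) (hg : g.natDegree ≤ l) (hfg : k + l ≤ (f * g).natDegree)
    (hk : 0 < k) (hl : 0 < l) : ¬ Irreducible (f * g) := by
  have hdeg := natDegree_mul_le (p := f) (q := g)
  intro hirr
  rcases hirr.isUnit_or_isUnit rfl with hu | hu <;>
    · have := natDegree_eq_zero_of_isUnit hu
      omega

end Polynomial

namespace Equiv.Perm

theorem sign_prodCongrLeft_finRotate (n m : ℕ) :
    sign (prodCongrLeft fun _ : Fin m => finRotate (n + 1)) = (-1) ^ (n * m) := by
  simp [sign_prodCongrLeft, sign_finRotate, pow_mul]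

end Equiv.Perm

section ColumnOperations

variable {R : Type*} [CommRing R] {m n : ℕ}

/-- Right multiplication adds `X ^ (k - j)` times block column `k` to block column `j`, for all
`k > j`. -/
noncomputable def tsrColumnOp (n m : ℕ) : Matrix (Fin n × Fin m) (Fin n × Fin m) R[X] :=
  (of fun i j : Fin n => if j ≤ i then (X : R[X]) ^ ((i : ℕ) - j) else 0) ⊗ₖ 1

theorem det_tsrColumnOp : (tsrColumnOp n m : Matrix _ _ R[X]).det = 1 := by
  rw [tsrColumnOp, det_kronecker, det_one, one_pow, mul_one, det_of_isLowerTriangular]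
  · simp
  · intro i j hij
    simp [not_le.mpr (OrderDual.toDual_lt_toDual.mp hij)]

theorem mul_tsrColumnOp_apply (M : Matrix (Fin n × Fin m) (Fin n × Fin m) R[X])
    (p : Fin n × Fin m) (j : Fin n) (t : Fin m) :
    (M * tsrColumnOp n m : Matrix _ _ R[X]) p (j, t) =
      ∑ x, M p (x, t) * if j ≤ x then X ^ ((x : ℕ) - j) else 0 := by
  simp [tsrColumnOp, mul_apply, Fintype.sum_prod_type, one_apply]

end ColumnOperations

section TSR

variable {F : Type*} [Field F] {m n : ℕ}

/-- The paper's `f_S`. -/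
noncomputable def tsrPoly (a : Fin n → F) : F[X] := ∑ j, C (a j) * X ^ (j : ℕ)

variable (T : Matrix (Fin m) (Fin m) F) (a : Fin (n + 1) → F)

theorem charmatrix_tsrMatrix_castSucc (i : Fin n) (s : Fin m) (x : Fin (n + 1)) (t : Fin m) :
    charmatrix (tsrMatrix T a) (i.castSucc, s) (x, t) =
      (if x = i.castSucc ∧ s = t then X else 0) - if x = i.succ ∧ s = t then 1 else 0 := by
  have hx : (x : ℕ) = i + 1 ↔ x = i.succ := by rw [Fin.ext_iff, Fin.val_succ]
  have hi : n ≠ (i : ℕ) := i.isLt.ne'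
  by_cases hs : s = t <;> simp [charmatrix_apply, tsrMatrix, diagonal_apply, hx, hi, hs, eq_comm,
    apply_ite C]

theorem charmatrix_tsrMatrix_last (s : Fin m) (x : Fin (n + 1)) (t : Fin m) :
    charmatrix (tsrMatrix T a) (Fin.last n, s) (x, t) =
      (if x = Fin.last n ∧ s = t then X else 0) - C (a x) * C (T s t) := by
  have hx : (x : ℕ) ≠ n + 1 := by omega
  by_cases hs : s = t <;> simp [charmatrix_apply, tsrMatrix, diagonal_apply, hx, hs, eq_comm]

theorem charmatrix_tsrMatrix_mul_tsrColumnOp_castSucc (i : Fin n) (s : Fin m) (j : Fin (n + 1))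
    (t : Fin m) :
    (charmatrix (tsrMatrix T a) * tsrColumnOp (n + 1) m : Matrix _ _ F[X])
      (i.castSucc, s) (j, t) = if j = i.succ ∧ s = t then -1 else 0 := by
  rw [mul_tsrColumnOp_apply]
  simp only [charmatrix_tsrMatrix_castSucc, sub_mul, Finset.sum_sub_distrib, ite_mul, zero_mul,
    ite_and]
  by_cases hs : s = t
  · simp only [hs, if_true, Finset.sum_ite_eq', Finset.mem_univ]
    rcases lt_trichotomy j i.succ with h | rfl | h
    · have hj : j ≤ i.castSucc := Fin.le_castSucc_iff.mpr h
      have hj' : (j : ℕ) ≤ i := hj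
      rw [if_pos hj, if_pos h.le, if_neg h.ne, Fin.val_castSucc, Fin.val_succ, one_mul,
        ← pow_succ', Nat.sub_add_comm hj', sub_self]
    · simp
    · have hj : ¬ j ≤ i.castSucc := fun hj => (hj.trans_lt Fin.castSucc_lt_succ).not_gt h
      simp [hj, h.not_ge, h.ne']
  · simp [hs]

theorem charmatrix_tsrMatrix_mul_tsrColumnOp_last_zero (s t : Fin m) :
    (charmatrix (tsrMatrix T a) * tsrColumnOp (n + 1) m : Matrix _ _ F[X])
      (Fin.last n, s) (0, t) =
      ((X : F[X]) ^ (n + 1) • (1 : Matrix (Fin m) (Fin m) F[X]) - tsrPoly a • T.map C) s t := by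
  rw [mul_tsrColumnOp_apply]
  simp only [charmatrix_tsrMatrix_last, sub_mul, Finset.sum_sub_distrib, ite_mul, zero_mul,
    ite_and, Fin.zero_le, if_true, Fin.val_zero, Nat.sub_zero]
  rw [Finset.sum_ite_eq', if_pos (Finset.mem_univ _), Fin.val_last, ← pow_succ']
  simp only [Matrix.sub_apply, Matrix.smul_apply, one_apply, map_apply, smul_eq_mul, mul_ite,
    mul_one, mul_zero, tsrPoly, Finset.sum_mul]
  congr 1
  exact Finset.sum_congr rfl fun x _ => by ring

/-- Rotating the block columns makes the matrix block lower triangular, with diagonal blocks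
`-1` (`n` of them) and `X ^ (n + 1) • 1 - f_S • T`. -/
theorem det_charmatrix_tsrMatrix_mul_tsrColumnOp_rotate :
    ((charmatrix (tsrMatrix T a) * tsrColumnOp (n + 1) m : Matrix _ _ F[X]).submatrix id
      (Equiv.prodCongrLeft fun _ => finRotate (n + 1))).det =
      ((X : F[X]) ^ (n + 1) • (1 : Matrix (Fin m) (Fin m) F[X]) - tsrPoly a • T.map C).det *
        (-1) ^ (n * m) := by
  set P : Matrix _ _ F[X] := charmatrix (tsrMatrix T a) * tsrColumnOp (n + 1) m
  set π : Equiv.Perm (Fin (n + 1) × Fin m) := Equiv.prodCongrLeft fun _ => finRotate (n + 1)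
  have hrot : ∀ q, π q = (q.1 + 1, q.2) := fun _ => by
    rw [Equiv.prodCongrLeft_apply, finRotate_apply]
  let e : {p : Fin (n + 1) × Fin m // p.1 = Fin.last n} ≃ Fin m :=
    Equiv.prodSubtypeFstEquivSubtypeProd.trans (Equiv.uniqueProd (Fin m) {i // i = Fin.last n})
  rw [twoBlockTriangular_det _ (fun p => p.1 = Fin.last n)]
  · congr 1
    · rw [← det_submatrix_equiv_self e]
      congr 1
      ext ⟨⟨i, s⟩, hi⟩ ⟨⟨j, t⟩, hj⟩ : 1
      obtain rfl : i = Fin.last n := hi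
      obtain rfl : j = Fin.last n := hj
      simp only [toSquareBlockProp_def, of_apply, submatrix_apply, id, hrot, Fin.last_add_one, P,
        charmatrix_tsrMatrix_mul_tsrColumnOp_last_zero]
      rfl
    · have hrest : ((P.submatrix id π).toSquareBlockProp fun p => ¬ p.1 = Fin.last n) = -1 := by
        ext ⟨⟨i, s⟩, hi⟩ ⟨⟨j, t⟩, hj⟩ : 1
        obtain ⟨i, rfl⟩ := Fin.exists_castSucc_eq.mpr hi
        obtain ⟨j, rfl⟩ := Fin.exists_castSucc_eq.mpr hj
        simp [toSquareBlockProp_def, P, hrot, Fin.coeSucc_eq_succ,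
          charmatrix_tsrMatrix_mul_tsrColumnOp_castSucc, one_apply, eq_comm (a := i)]
        rw [apply_ite Neg.neg, neg_zero]
      rw [hrest, det_neg, det_one, mul_one, Fintype.card_subtype_compl, Fintype.card_congr e,
        Fintype.card_prod, Fintype.card_fin, Fintype.card_fin, add_mul, one_mul, Nat.add_sub_cancel]
  · rintro ⟨i, s⟩ hi ⟨j, t⟩ rfl
    obtain ⟨i, rfl⟩ := Fin.exists_castSucc_eq.mpr hi
    simp [P, hrot, charmatrix_tsrMatrix_mul_tsrColumnOp_castSucc, (Fin.succ_ne_zero i).symm]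

theorem charpoly_tsrMatrix_eq_det : (tsrMatrix T a).charpoly =
    ((X : F[X]) ^ (n + 1) • (1 : Matrix (Fin m) (Fin m) F[X]) - tsrPoly a • T.map C).det := by
  have h := det_permute' (Equiv.prodCongrLeft fun _ : Fin m => finRotate (n + 1))
    (charmatrix (tsrMatrix T a) * tsrColumnOp (n + 1) m)
  rw [det_charmatrix_tsrMatrix_mul_tsrColumnOp_rotate, Equiv.Perm.sign_prodCongrLeft_finRotate,
    det_mul, det_tsrColumnOp, mul_one, mul_comm] at h
  exact ((isUnit_neg_one.pow _).mul_left_cancel (by exact_mod_cast h.symm))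

theorem charpoly_tsrMatrix : (tsrMatrix T a).charpoly =
    MvPolynomial.aeval ![X ^ (n + 1), tsrPoly a] (T.charpoly.homogenize m) := by
  rw [charpoly_tsrMatrix_eq_det, ← algebraMap_eq, det_smul_one_sub_smul_map, Fintype.card_fin]

end TSR

theorem tsr_charpoly_reducible_general {F : Type*} [Field F] {m n : ℕ}
    (hn : 1 ≤ n) (T : Matrix (Fin m) (Fin m) F)
    (hT : ¬ Irreducible T.charpoly) (a : Fin n → F) :
    ¬ Irreducible (tsrMatrix T a).charpoly := by
  obtain ⟨n, rfl⟩ : ∃ k, n = k + 1 := ⟨n - 1, by omega⟩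
  by_cases h1 : T.charpoly = 1
  · have hm : 0 = m := by simpa [h1] using T.charpoly_natDegree_eq_dim
    simp [charpoly_tsrMatrix, h1, ← hm]
  obtain ⟨g, h, hg, hh, hgh, hg0, hh0⟩ : ∃ g h : F[X], g.Monic ∧ h.Monic ∧ g * h = T.charpoly ∧
      g.natDegree ≠ 0 ∧ h.natDegree ≠ 0 := by
    simpa [T.charpoly_monic.irreducible_iff_natDegree, h1] using hT
  have hm : g.natDegree + h.natDegree = m := by
    rw [← hg.natDegree_mul hh, hgh, charpoly_natDegree_eq_dim, Fintype.card_fin]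
  have hsplit : T.charpoly.homogenize m =
      g.homogenize g.natDegree * h.homogenize h.natDegree := by
    rw [← hgh, ← homogenize_mul _ _ le_rfl le_rfl, hm]
  have hX : ((X : F[X]) ^ (n + 1)).natDegree ≤ n + 1 := natDegree_X_pow_le _
  have hS : (tsrPoly a).natDegree ≤ n + 1 :=
    natDegree_le_iff_degree_le.mpr (degree_sum_fin_lt a).le
  rw [charpoly_tsrMatrix, hsplit, map_mul]
  refine not_irreducible_mul_of_natDegree_le (natDegree_aeval_homogenize_le _ _ hX hS)
    (natDegree_aeval_homogenize_le _ _ hX hS) ?_ (by positivity) (by positivity)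
  rw [← map_mul, ← hsplit, ← charpoly_tsrMatrix, charpoly_natDegree_eq_dim, Fintype.card_prod,
    Fintype.card_fin, Fintype.card_fin, ← hm]
  exact le_of_eq (by ring)

theorem tsr_charpoly_reducible {F : Type*} [Field F] [Finite F] {m n : ℕ}
    (hm : 2 ≤ m) (hn : 1 ≤ n) (T : Matrix (Fin m) (Fin m) F)
    (hT : ¬ Irreducible T.charpoly) (a : Fin n → F) :
    ¬ Irreducible (tsrMatrix T a).charpoly :=
  tsr_charpoly_reducible_general hn T hT a
end

section
/- Let σ be a nonzero linear recurring sequence over a finite field F with irreducible characteristic polynomial f of degree d. Then the (least) period of σ equals the multiplicative order of λ in the field K = F[λ]/⟨f⟩. -/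
open Polynomial

/-- The shift operator on sequences, as a linear endomorphism. -/
def shiftOp (F : Type*) [Field F] : Module.End F (ℕ → F) where
  toFun s := fun n => s (n + 1)
  map_add' _ _ := rfl
  map_smul' _ _ := rfl

lemma shiftOp_pow_apply {F : Type*} [Field F] (i : ℕ) (s : ℕ → F) (n : ℕ) :
    ((shiftOp F) ^ i) s n = s (n + i) := by
  induction i generalizing s n with
  | zero => simp
  | succ k ih =>
    rw [pow_succ, Module.End.mul_apply, ih]
    show s (n + k + 1) = s (n + (k + 1))
    ring_nf

lemma aeval_shiftOp_apply {F : Type*} [Field F] (p : Polynomial F) (s : ℕ → F) (n : ℕ) :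
    (aeval (shiftOp F) p) s n = ∑ i ∈ Finset.range (p.natDegree + 1), p.coeff i * s (n + i) := by
  rw [aeval_eq_sum_range, LinearMap.sum_apply, Finset.sum_apply]
  refine Finset.sum_congr rfl fun i _ => ?_
  rw [LinearMap.smul_apply, Pi.smul_apply, smul_eq_mul, shiftOp_pow_apply]

theorem lfsr_period_eq_orderOf {F : Type*} [Field F] [Fintype F]
    (f : Polynomial F) (d : ℕ) (hm : f.Monic) (hd : f.natDegree = d) (hd1 : 1 ≤ d)
    (hirr : Irreducible f) (hf0 : f.eval 0 ≠ 0)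
    (s : ℕ → F)
    (hrec : ∀ n : ℕ, ∑ i ∈ Finset.range (d + 1), f.coeff i * s (n + i) = 0)
    (hnz : ∃ n : ℕ, s n ≠ 0) :
    IsLeast {t : ℕ | 0 < t ∧ ∀ n : ℕ, s (n + t) = s n} (orderOf (AdjoinRoot.root f)) := by
  haveI : Fact (Irreducible f) := ⟨hirr⟩
  have hf0' : f ≠ 0 := hm.ne_zero
  set α := AdjoinRoot.root f with hα
  -- K is finite
  haveI : Module.Finite F (AdjoinRoot f) := (AdjoinRoot.powerBasis hf0').finite
  haveI : Finite (AdjoinRoot f) := Module.finite_of_finite F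
  -- α ≠ 0
  have hα0 : α ≠ 0 := by
    intro h
    have h1 : (aeval α) f = 0 := AdjoinRoot.eval₂_root f
    rw [h, aeval_def, eval₂_at_zero] at h1
    have h2 : f.coeff 0 = 0 := (_root_.map_eq_zero (algebraMap F (AdjoinRoot f))).mp h1
    rw [coeff_zero_eq_eval_zero] at h2
    exact hf0 h2
  -- f annihilates s
  have hfs : (aeval (shiftOp F) f) s = 0 := by
    funext n
    rw [aeval_shiftOp_apply, hd]
    exact hrec n
  have hXt : ∀ t : ℕ, (aeval (shiftOp F) (X ^ t - 1 : Polynomial F)) s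
      = fun n => s (n + t) - s n := by
    intro t
    funext n
    rw [map_sub, map_pow, aeval_X, map_one, LinearMap.sub_apply, Pi.sub_apply,
      shiftOp_pow_apply, Module.End.one_apply]
  -- the key equivalence: s has period t ↔ f ∣ X^t - 1
  have key : ∀ t : ℕ, (f ∣ X ^ t - 1) ↔ (∀ n : ℕ, s (n + t) = s n) := by
    intro t
    constructor
    · rintro ⟨q, hq⟩ n
      have : (aeval (shiftOp F) (X ^ t - 1 : Polynomial F)) s = 0 := by
        rw [hq, mul_comm, map_mul, Module.End.mul_apply, hfs, map_zero]
      rw [hXt t] at this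
      have := congrFun this n
      simpa [sub_eq_zero] using this
    · intro hper
      by_contra hndvd
      have hcop : IsCoprime f (X ^ t - 1) := hirr.coprime_iff_not_dvd.mpr hndvd
      obtain ⟨a, b, hab⟩ := hcop
      have hgs : (aeval (shiftOp F) (X ^ t - 1 : Polynomial F)) s = 0 := by
        rw [hXt t]; funext n; rw [hper n, sub_self]; rfl
      have hs0 : s = 0 := by
        have h1 : (aeval (shiftOp F) (a * f + b * (X ^ t - 1))) s = s := by
          rw [hab, map_one, Module.End.one_apply]
        rw [map_add, map_mul, map_mul, LinearMap.add_apply, Module.End.mul_apply,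
          Module.End.mul_apply, hfs, hgs, map_zero, map_zero, add_zero] at h1
        exact h1.symm
      obtain ⟨n, hn⟩ := hnz
      exact hn (by rw [hs0]; rfl)
  -- f ∣ X^t - 1 ↔ α ^ t = 1
  have keyα : ∀ t : ℕ, (α ^ t = 1) ↔ (f ∣ X ^ t - 1) := by
    intro t
    rw [← AdjoinRoot.mk_eq_zero (f := f), map_sub, map_pow, AdjoinRoot.mk_X, map_one, ← hα,
      sub_eq_zero]
  -- order positivity
  have hpos : 0 < orderOf α := by
    have h : orderOf (Units.mk0 α hα0 : (AdjoinRoot f)ˣ) = orderOf α := by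
      rw [← orderOf_units]; rfl
    rw [← h]
    exact orderOf_pos _
  constructor
  · exact ⟨hpos, (key _).mp ((keyα _).mp (pow_orderOf_eq_one α))⟩
  · rintro t ⟨ht0, htper⟩
    have : orderOf α ∣ t := orderOf_dvd_of_pow_eq_one ((keyα t).mpr ((key t).mpr htper))
    exact Nat.le_of_dvd ht0 this
end

section
/- Let F be a finite field, d ≥ 1, T a linear transformation of F^d, and v ∈ F^d nonzero. The sequence ⟨T^n(v)⟩_{n≥0} has period |F|^d - 1 (i.e., T^{|F|^d - 1}(v) = v and T^k(v) ≠ v for 0 < k < |F|^d - 1) for every nonzero v if and only if the characteristic polynomial of T is primitive over F. -/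
/-!
Evaluation at `T` factors through a ring map `F[X] ⧸ (χ_T) → M_d(F)` sending the root to `T`.
If every nonzero vector has period `q^d - 1`, then `T` has order `q^d - 1`, so the root has
`q^d - 1` distinct nonzero powers. As `F[X] ⧸ (χ_T)` has only `q^d` elements, these powers are all
of its nonzero elements, so it is a domain and `χ_T` is irreducible. Conversely, when `χ_T` is
irreducible the map is an embedding of a field: the root and `T` have the same order, and for
`0 < k < q^d - 1` the matrix `T^k - 1` is the image of the nonzero element `root^k - 1`, hence
invertible, so it fixes no nonzero vector.
-/

open Polynomial Matrix

theorem exists_pow_eq_of_injOn_of_card_le {M₀ : Type*} [MonoidWithZero M₀] [Fintype M₀]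
    {x : M₀} {N : ℕ} (hinj : (Set.Iio N).InjOn (x ^ ·)) (hx : ∀ k, x ^ k ≠ 0)
    (hcard : Fintype.card M₀ ≤ N + 1) {a : M₀} (ha : a ≠ 0) : ∃ k, x ^ k = a := by
  classical
  have hpowers : (Finset.range N).image (x ^ ·) = Finset.univ.erase 0 := by
    refine Finset.eq_of_subset_of_card_le (fun y hy => ?_) ?_
    · obtain ⟨k, -, rfl⟩ := Finset.mem_image.mp hy
      exact Finset.mem_erase.mpr ⟨hx k, Finset.mem_univ _⟩
    · rw [Finset.card_image_of_injOn (by simpa using hinj), Finset.card_range,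
        Finset.card_erase_of_mem (Finset.mem_univ _), Finset.card_univ]
      omega
  obtain ⟨k, -, hk⟩ :=
    Finset.mem_image.mp (hpowers ▸ Finset.mem_erase.mpr ⟨ha, Finset.mem_univ a⟩)
  exact ⟨k, hk⟩

theorem noZeroDivisors_of_forall_exists_pow_eq {M₀ : Type*} [CommMonoidWithZero M₀] {x : M₀}
    (hx : ∀ k, x ^ k ≠ 0) (h : ∀ a : M₀, a ≠ 0 → ∃ k, x ^ k = a) : NoZeroDivisors M₀ where
  eq_zero_or_eq_zero_of_mul_eq_zero {a b} hab := by
    by_contra! hne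
    obtain ⟨i, rfl⟩ := h a hne.1
    obtain ⟨j, rfl⟩ := h b hne.2
    exact hx (i + j) (by rw [pow_add, hab])

namespace Matrix

theorem orderOf_eq_of_forall_mulVec {R n : Type*} [Semiring R] [Nontrivial R] [Fintype n]
    [DecidableEq n] [Nonempty n] {T : Matrix n n R} {N : ℕ} (hN : 0 < N)
    (h : ∀ v : n → R, v ≠ 0 → (T ^ N) *ᵥ v = v ∧ ∀ k, 0 < k → k < N → (T ^ k) *ᵥ v ≠ v) :
    orderOf T = N := by
  have hsingle (i : n) : (Pi.single i 1 : n → R) ≠ 0 := Pi.single_ne_zero_iff.mpr one_ne_zero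
  refine (orderOf_eq_iff hN).mpr ⟨ext_of_mulVec_single fun i => ?_, fun k hkN hk hTk => ?_⟩
  · rw [(h _ (hsingle i)).1, one_mulVec]
  · obtain ⟨i⟩ := ‹Nonempty n›
    exact (h _ (hsingle i)).2 k hk hkN (by rw [hTk, one_mulVec])

variable {F n : Type*} [Field F] [Fintype n] [DecidableEq n]

noncomputable def charpolyLift (T : Matrix n n F) : AdjoinRoot T.charpoly →+* Matrix n n F :=
  Ideal.Quotient.lift _ (aeval T).toRingHom fun p hp => by
    obtain ⟨q, rfl⟩ := Ideal.mem_span_singleton.mp hp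
    simp [aeval_self_charpoly]

@[simp]
theorem charpolyLift_root (T : Matrix n n F) : T.charpolyLift (AdjoinRoot.root _) = T :=
  aeval_X T

theorem orderOf_root_charpoly {T : Matrix n n F} (hT : Irreducible T.charpoly) :
    orderOf (AdjoinRoot.root T.charpoly) = orderOf T := by
  have := Fact.mk hT
  have : Nonempty n := by
    by_contra! hn
    exact hT.not_isUnit (by simp [charpoly_isEmpty])
  rw [← orderOf_injective T.charpolyLift.toMonoidHom T.charpolyLift.injective]
  simp

theorem pow_mulVec_ne_self_of_irreducible {T : Matrix n n F} (hT : Irreducible T.charpoly)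
    {k : ℕ} (hk : AdjoinRoot.root T.charpoly ^ k ≠ 1) {v : n → F} (hv : v ≠ 0) :
    (T ^ k) *ᵥ v ≠ v := by
  have := Fact.mk hT
  have hunit : IsUnit (T ^ k - 1) := by
    simpa using (isUnit_iff_ne_zero.mpr (sub_ne_zero.mpr hk)).map T.charpolyLift
  intro hfix
  refine hv (mulVec_injective_iff_isUnit.mpr hunit ?_)
  rw [sub_mulVec, hfix, one_mulVec, sub_self, mulVec_zero]

theorem irreducible_charpoly_of_orderOf_eq [Fintype F] [Nonempty n] {T : Matrix n n F}
    (hT : orderOf T = Fintype.card F ^ Fintype.card n - 1) : Irreducible T.charpoly := by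
  have hf : T.charpoly.Monic := charpoly_monic T
  have : Module.Finite F (AdjoinRoot T.charpoly) := hf.finite_adjoinRoot
  have : Finite (AdjoinRoot T.charpoly) := Module.finite_of_finite F
  have := Fintype.ofFinite (AdjoinRoot T.charpoly)
  have hcard : Fintype.card (AdjoinRoot T.charpoly) = Fintype.card F ^ Fintype.card n := by
    rw [Module.card_eq_pow_finrank (K := F), (AdjoinRoot.powerBasis hf.ne_zero).finrank,
      AdjoinRoot.powerBasis_dim, charpoly_natDegree_eq_dim]
  have hTunit : IsUnit T := by
    refine (orderOf_pos_iff.mp ?_).isUnit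
    rw [hT, Nat.sub_pos_iff_lt]
    exact Nat.one_lt_pow Fintype.card_ne_zero Fintype.one_lt_card
  have hx : ∀ k, AdjoinRoot.root T.charpoly ^ k ≠ 0 := fun k h0 =>
    (hTunit.pow k).ne_zero (by simpa using congrArg T.charpolyLift h0)
  have hinj : (Set.Iio (orderOf T)).InjOn (AdjoinRoot.root T.charpoly ^ ·) :=
    fun i hi j hj hij => pow_injOn_Iio_orderOf hi hj (by simpa using congrArg T.charpolyLift hij)
  have : Nontrivial (AdjoinRoot T.charpoly) := ⟨⟨_, _, hx 0⟩⟩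
  have := noZeroDivisors_of_forall_exists_pow_eq hx fun a ha =>
    exists_pow_eq_of_injOn_of_card_le hinj hx (by omega) ha
  have : IsDomain (AdjoinRoot T.charpoly) := NoZeroDivisors.to_isDomain _
  exact ((Ideal.span_singleton_prime hf.ne_zero).mp
    ((Ideal.Quotient.isDomain_iff_prime _).mp ‹_›)).irreducible

end Matrix

theorem max_period_iff_primitive {F : Type*} [Field F] [Fintype F] {d : ℕ} (hd : 1 ≤ d)
    (T : Matrix (Fin d) (Fin d) F) :
    (∀ v : Fin d → F, v ≠ 0 →
        (T ^ (Fintype.card F ^ d - 1)).mulVec v = v ∧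
        ∀ k : ℕ, 0 < k → k < Fintype.card F ^ d - 1 → (T ^ k).mulVec v ≠ v) ↔
      (Irreducible T.charpoly ∧
        orderOf (AdjoinRoot.root T.charpoly) = Fintype.card F ^ d - 1) := by
  have : Nonempty (Fin d) := ⟨⟨0, hd⟩⟩
  constructor
  · intro h
    have hN : 0 < Fintype.card F ^ d - 1 :=
      Nat.sub_pos_of_lt (Nat.one_lt_pow (by omega) Fintype.one_lt_card)
    have hT : orderOf T = Fintype.card F ^ d - 1 := orderOf_eq_of_forall_mulVec hN h
    have hirr := irreducible_charpoly_of_orderOf_eq (T := T) (by rwa [Fintype.card_fin])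
    exact ⟨hirr, (orderOf_root_charpoly hirr).trans hT⟩
  · rintro ⟨hirr, hroot⟩ v hv
    have hT : orderOf T = Fintype.card F ^ d - 1 := (orderOf_root_charpoly hirr).symm.trans hroot
    refine ⟨by rw [← hT, pow_orderOf_eq_one, one_mulVec], fun k hk hkN => ?_⟩
    exact pow_mulVec_ne_self_of_irreducible hirr (pow_ne_one_of_lt_orderOf hk.ne' (hroot ▸ hkN)) hv
end
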